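/- Let p ≥ 1 with 1/p + 1/q = 1 and let s > 0. If f : ℝ^n → [0,∞) is s-concave and the support {x : f(x) > 0} contains the origin in its interior, then f is L_{p,s}-concave; that is, for all λ, t ∈ [0,1] and all x, y ∈ ℝ^n, f( C_{p,λ,t} x + D_{p,λ,t} y ) ≥ M_s^{(C_{p,λ,t}, D_{p,λ,t})}(f(x), f(y)). -/
import Mathlib


open Set

/-- The `s`-mean of `u, v ≥ 0` with weights `a, b ≥ 0` (`s ≠ 0`):
`(a u^s + b v^s)^{1/s}` when `uv > 0`, and `0` otherwise. -/
noncomputable def Ms (s a b u v : ℝ) : ℝ :=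
  if 0 < u * v then (a * u ^ s + b * v ^ s) ^ (1 / s) else 0

/-- For `p ≥ 1` and `s > 0`, an `s`-concave function
`f : ℝⁿ → [0,∞)` whose support contains the origin in its interior is
`L_{p,s}`-concave. -/
theorem stmt_15 {n : ℕ} (p q s : ℝ) (hp : 1 ≤ p) (hpq : 1 / p + 1 / q = 1)
    (hs : 0 < s) (f : (Fin n → ℝ) → ℝ) (hf0 : ∀ x, 0 ≤ f x)
    (hconc : ∀ x y : Fin n → ℝ, 0 < f x * f y → ∀ τ ∈ Icc (0 : ℝ) 1,
      ((1 - τ) * f x ^ s + τ * f y ^ s) ^ (1 / s) ≤ f ((1 - τ) • x + τ • y))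
    (hsupp : (0 : Fin n → ℝ) ∈ interior {x | 0 < f x}) :
    ∀ l ∈ Icc (0 : ℝ) 1, ∀ t ∈ Icc (0 : ℝ) 1, ∀ x y : Fin n → ℝ,
      Ms s ((1 - t) ^ (1 / p) * (1 - l) ^ (1 / q)) (t ^ (1 / p) * l ^ (1 / q))
          (f x) (f y)
        ≤ f (((1 - t) ^ (1 / p) * (1 - l) ^ (1 / q)) • x
              + (t ^ (1 / p) * l ^ (1 / q)) • y) := by
  intro l hl t ht x y
  have hf0pos : 0 < f 0 := by have h := interior_subset hsupp; simpa using h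
  have hppos : (0:ℝ) < p := by linarith
  have hp0 : 0 ≤ 1 / p := by positivity
  have hp1 : 1 / p ≤ 1 := by rw [div_le_one hppos]; exact hp
  have hq0 : 0 ≤ 1 / q := by linarith
  set a := (1 - t) ^ (1 / p) * (1 - l) ^ (1 / q) with ha
  set b := t ^ (1 / p) * l ^ (1 / q) with hb
  have ht1 : (0:ℝ) ≤ 1 - t := by linarith [ht.2]
  have hl1 : (0:ℝ) ≤ 1 - l := by linarith [hl.2]
  have ha0 : 0 ≤ a := mul_nonneg (Real.rpow_nonneg ht1 _) (Real.rpow_nonneg hl1 _)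
  have hb0 : 0 ≤ b := mul_nonneg (Real.rpow_nonneg ht.1 _) (Real.rpow_nonneg hl.1 _)
  have hab : a + b ≤ 1 := by
    have h1 := Real.geom_mean_le_arith_mean2_weighted hp0 hq0 ht1 hl1 hpq
    have h2 := Real.geom_mean_le_arith_mean2_weighted hp0 hq0 ht.1 hl.1 hpq
    nlinarith [h1, h2, hpq]
  unfold Ms
  split_ifs with hxy
  swap
  · exact hf0 _
  have hfx : 0 < f x := by nlinarith [hf0 x, hf0 y]
  have hfy : 0 < f y := by nlinarith [hf0 x, hf0 y]
  set σ := a + b with hσdef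
  rcases eq_or_lt_of_le (by positivity : (0:ℝ) ≤ σ) with hσ0 | hσpos
  · have haz : a = 0 := by linarith
    have hbz : b = 0 := by linarith
    rw [haz, hbz]
    simp only [zero_mul, add_zero, zero_smul, zero_add]
    rw [Real.zero_rpow (one_div_ne_zero hs.ne')]
    exact hf0 _
  · have hbσ : b / σ ∈ Icc (0:ℝ) 1 :=
      ⟨div_nonneg hb0 hσpos.le, by rw [div_le_one hσpos]; linarith⟩
    have h1 := hconc x y hxy (b / σ) hbσ
    have haσ : 1 - b / σ = a / σ := by field_simp; linarith [hσdef]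
    rw [haσ] at h1
    have hfxs : 0 < f x ^ s := Real.rpow_pos_of_pos hfx s
    have hfys : 0 < f y ^ s := Real.rpow_pos_of_pos hfy s
    have hm : 0 < a / σ * f x ^ s + b / σ * f y ^ s := by
      rcases lt_or_ge 0 a with h | h
      · have h3 := mul_pos (div_pos h hσpos) hfxs
        nlinarith [mul_nonneg (div_nonneg hb0 hσpos.le) hfys.le]
      · have hbpos : 0 < b := by linarith
        have h3 := mul_pos (div_pos hbpos hσpos) hfys
        nlinarith [mul_nonneg (div_nonneg ha0 hσpos.le) hfxs.le]
    set z := (a / σ) • x + (b / σ) • y with hzdef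
    have hfz : 0 < f z := lt_of_lt_of_le (Real.rpow_pos_of_pos hm _) h1
    have h2 := hconc z 0 (mul_pos hfz hf0pos) (1 - σ) ⟨by linarith, by linarith⟩
    rw [sub_sub_cancel] at h2
    have hzeq : σ • z + (1 - σ) • (0 : Fin n → ℝ) = a • x + b • y := by
      rw [hzdef, smul_add, smul_smul, smul_smul, smul_zero, add_zero,
        mul_div_cancel₀ _ hσpos.ne', mul_div_cancel₀ _ hσpos.ne']
    rw [hzeq] at h2
    refine le_trans ?_ h2
    apply Real.rpow_le_rpow (add_nonneg (mul_nonneg ha0 hfxs.le) (mul_nonneg hb0 hfys.le)) ?_ (one_div_nonneg.mpr hs.le)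
    have hms : (a / σ * f x ^ s + b / σ * f y ^ s) ≤ f z ^ s := by
      have := Real.rpow_le_rpow (Real.rpow_nonneg hm.le _) h1 hs.le
      rwa [← Real.rpow_mul hm.le, one_div, inv_mul_cancel₀ hs.ne', Real.rpow_one] at this
    have h0s : 0 ≤ (1 - σ) * f 0 ^ s :=
      mul_nonneg (by linarith) (Real.rpow_nonneg hf0pos.le _)
    have hσmul : σ * (a / σ * f x ^ s + b / σ * f y ^ s) = a * f x ^ s + b * f y ^ s := by
      rw [mul_add, ← mul_assoc, ← mul_assoc, mul_div_cancel₀ _ hσpos.ne',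
        mul_div_cancel₀ _ hσpos.ne']
    have key : a * f x ^ s + b * f y ^ s ≤ σ * f z ^ s := by
      rw [← hσmul]; exact mul_le_mul_of_nonneg_left hms hσpos.le
    linarith [key, h0s]
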